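/- Let (G, ω, μ) be an infinite connected weighted graph carrying a pseudo metric d with finite jump size s, finite balls, which is 2-intrinsic with bound 1 and also 1-intrinsic with bound C₀. Let V : G → ℝ with c₀ := inf_G V > 0. Let p ≥ 1 and α > 0 satisfy C₀ α e^{sα} < c₀ p. If u solves Δu - Vu = 0 on G and ∑_{x∈G} |u(x)|^p e^{-α d(x,x₀)} μ(x) < ∞ for some x₀ ∈ G, then u ≡ 0. -/

import Mathlib

/-!
By convexity of `t ↦ |t| ^ p` (Kato's inequality), `w = |u| ^ p` is a subsolution:
`c₀ p w(x) μ(x) ≤ ∑_y (w(y) - w(x)) ω(x,y)`. Test this against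
`φ_n = e^{-α d(·,x₀)} η_n`, where `η_n` is a cutoff equal to `1` on the ball of radius `n` and
vanishing outside the ball of radius `2n`. Summation by parts turns
`∑_x φ_n(x) ∑_y (w(y) - w(x)) ω(x,y)` into half the sum over pairs of
`(φ_n(x) - φ_n(y)) (w(y) - w(x)) ω(x,y)`, and across an edge
`|φ_n(x) - φ_n(y)| ≤ (α + 1/n) e^{sα} e^{-α d(x,x₀)} d(x,y)`. The 1-intrinsic bound then gives
`c₀ p ∑ η_n w e^{-αd} μ ≤ (α + 1/n) e^{sα} C₀ S` with `S = ∑ w e^{-αd} μ`; letting `n → ∞`,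
`c₀ p S ≤ C₀ α e^{sα} S`, which forces `S = 0`.
-/

open Filter Topology Function Real

lemma mul_rpow_sub_one_mul_sub_le_rpow_sub_rpow {p a b : ℝ} (hp : 1 ≤ p) (ha : 0 ≤ a)
    (hb : 0 ≤ b) : p * a ^ (p - 1) * (b - a) ≤ b ^ p - a ^ p := by
  rcases ha.eq_or_lt with rfl | ha
  · rcases hp.eq_or_lt with rfl | hp
    · simp
    · rw [zero_rpow (by linarith), zero_rpow (by linarith)]
      simpa using rpow_nonneg hb p
  · have bernoulli := one_add_mul_self_le_rpow_one_add
      (s := b / a - 1) (by linarith [div_nonneg hb ha.le]) hp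
    rw [add_sub_cancel, div_rpow hb ha.le] at bernoulli
    have hap := rpow_pos_of_pos ha p
    calc p * a ^ (p - 1) * (b - a) = a ^ p * (1 + p * (b / a - 1)) - a ^ p := by
          rw [rpow_sub_one ha.ne']; field_simp; ring
      _ ≤ a ^ p * (b ^ p / a ^ p) - a ^ p := by gcongr
      _ = b ^ p - a ^ p := by field_simp

lemma mul_abs_rpow_sub_one_mul_sign_mul_sub_le {p : ℝ} (hp : 1 ≤ p) (a b : ℝ) :
    p * |a| ^ (p - 1) * SignType.sign a * (b - a) ≤ |b| ^ p - |a| ^ p := by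
  have hsign : (SignType.sign a : ℝ) * b ≤ |b| := by
    rcases lt_trichotomy a 0 with h | rfl | h
    · simpa [_root_.sign_neg h] using neg_le_abs b
    · simp
    · simpa [_root_.sign_pos h] using le_abs_self b
  calc p * |a| ^ (p - 1) * SignType.sign a * (b - a)
        = p * |a| ^ (p - 1) * (SignType.sign a * b - SignType.sign a * a) := by ring
    _ = p * |a| ^ (p - 1) * (SignType.sign a * b - |a|) := by rw [sign_mul_self]
    _ ≤ p * |a| ^ (p - 1) * (|b| - |a|) := by gcongr
    _ ≤ |b| ^ p - |a| ^ p :=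
      mul_rpow_sub_one_mul_sub_le_rpow_sub_rpow hp (abs_nonneg a) (abs_nonneg b)

lemma abs_rpow_sub_one_mul_sign_mul_self {p : ℝ} (hp : p ≠ 0) (a : ℝ) :
    |a| ^ (p - 1) * SignType.sign a * a = |a| ^ p := by
  rw [mul_assoc, sign_mul_self, ← rpow_add_one' (abs_nonneg a) (by simpa using hp),
    sub_add_cancel]

noncomputable def cutoff (R t : ℝ) : ℝ := max 0 (min 1 (2 - t / R))

lemma cutoff_nonneg (R t : ℝ) : 0 ≤ cutoff R t := le_max_left _ _

lemma cutoff_le_one (R t : ℝ) : cutoff R t ≤ 1 := max_le zero_le_one (min_le_left _ _)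

lemma cutoff_eq_zero_of_le {R t : ℝ} (hR : 0 < R) (h : 2 * R ≤ t) : cutoff R t = 0 := by
  have : 2 ≤ t / R := (le_div_iff₀ hR).2 (by linarith)
  exact max_eq_left (min_le_of_right_le (by linarith))

lemma cutoff_eq_one_of_le {R t : ℝ} (hR : 0 < R) (h : t ≤ R) : cutoff R t = 1 := by
  have : t / R ≤ 1 := (div_le_one hR).2 h
  rw [cutoff, min_eq_left (by linarith), max_eq_right zero_le_one]

lemma abs_cutoff_sub_cutoff_le {R : ℝ} (hR : 0 < R) (t t' : ℝ) :
    |cutoff R t - cutoff R t'| ≤ |t - t'| / R := by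
  calc |cutoff R t - cutoff R t'| ≤ |min 1 (2 - t / R) - min 1 (2 - t' / R)| := by
        simpa only [cutoff, max_comm (0 : ℝ)] using abs_max_sub_max_le_abs _ _ 0
    _ ≤ |(2 - t / R) - (2 - t' / R)| := by
        simpa using abs_min_sub_min_le_max 1 (2 - t / R) 1 (2 - t' / R)
    _ = |t - t'| / R := by
        rw [← abs_of_pos hR, ← abs_div, abs_of_pos hR, abs_sub_comm]; ring_nf

lemma abs_exp_neg_mul_sub_le {α t t' : ℝ} (hα : 0 ≤ α) :
    |exp (-α * t) - exp (-α * t')| ≤ α * |t - t'| * max (exp (-α * t)) (exp (-α * t')) := by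
  wlog h : t ≤ t' generalizing t t'
  · rw [abs_sub_comm, abs_sub_comm t, max_comm]; exact this (le_of_not_ge h)
  have hsplit : exp (-α * t') = exp (-α * t) * exp (-(α * (t' - t))) := by
    rw [← exp_add]; ring_nf
  have hmono : exp (-α * t') ≤ exp (-α * t) := exp_le_exp.2 (by nlinarith)
  rw [abs_of_nonneg (sub_nonneg.2 hmono), max_eq_left hmono, abs_sub_comm,
    abs_of_nonneg (sub_nonneg.2 h), hsplit]
  have := one_sub_le_exp_neg (α * (t' - t))
  nlinarith [exp_pos (-α * t)]

lemma exp_neg_mul_le_exp_mul_exp_neg_mul {α δ t t' : ℝ} (hα : 0 ≤ α) (h : |t - t'| ≤ δ) :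
    exp (-α * t') ≤ exp (δ * α) * exp (-α * t) := by
  rw [← exp_add]
  exact exp_le_exp.2 (by nlinarith [le_abs_self (t - t')])

lemma abs_exp_mul_cutoff_sub_le {α δ R t t' : ℝ} (hα : 0 ≤ α) (hR : 0 < R) (h : |t - t'| ≤ δ) :
    |exp (-α * t) * cutoff R t - exp (-α * t') * cutoff R t'|
      ≤ (α + 1 / R) * exp (δ * α) * exp (-α * t) * |t - t'| := by
  have hmax : max (exp (-α * t)) (exp (-α * t')) ≤ exp (δ * α) * exp (-α * t) :=
    max_le (exp_neg_mul_le_exp_mul_exp_neg_mul hα (by simpa using (abs_nonneg _).trans h))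
      (exp_neg_mul_le_exp_mul_exp_neg_mul hα h)
  calc |exp (-α * t) * cutoff R t - exp (-α * t') * cutoff R t'|
      = |(exp (-α * t) - exp (-α * t')) * cutoff R t
          + exp (-α * t') * (cutoff R t - cutoff R t')| := by ring_nf
    _ ≤ |exp (-α * t) - exp (-α * t')| * cutoff R t
          + exp (-α * t') * |cutoff R t - cutoff R t'| := by
        refine (abs_add_le _ _).trans_eq ?_
        rw [abs_mul, abs_mul, abs_of_nonneg (cutoff_nonneg R t), abs_of_pos (exp_pos _)]
    _ ≤ α * |t - t'| * max (exp (-α * t)) (exp (-α * t')) * 1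
          + max (exp (-α * t)) (exp (-α * t')) * (|t - t'| / R) := by
        gcongr
        · exact cutoff_nonneg R t
        · exact abs_exp_neg_mul_sub_le hα
        · exact cutoff_le_one R t
        · exact le_max_right _ _
        · exact abs_cutoff_sub_cutoff_le hR t t'
    _ = (α + 1 / R) * max (exp (-α * t)) (exp (-α * t')) * |t - t'| := by ring
    _ ≤ (α + 1 / R) * (exp (δ * α) * exp (-α * t)) * |t - t'| := by gcongr
    _ = (α + 1 / R) * exp (δ * α) * exp (-α * t) * |t - t'| := by ring

lemma sub_mul_sub_le_mul_add_mul {a b u v A B : ℝ} (hu : 0 ≤ u) (hv : 0 ≤ v)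
    (hA : |a - b| ≤ A) (hB : |a - b| ≤ B) : (a - b) * (v - u) ≤ A * u + B * v :=
  calc (a - b) * (v - u) ≤ |a - b| * |v - u| := (le_abs_self _).trans (abs_mul _ _).le
    _ ≤ |a - b| * (u + v) := by
        gcongr; exact abs_sub_le_iff.2 ⟨by linarith, by linarith⟩
    _ ≤ A * u + B * v := by nlinarith [abs_nonneg (a - b)]

lemma exp_mul_cutoff_sub_mul_sub_le {α s R t t' δ a b : ℝ} (hα : 0 ≤ α) (hR : 0 < R)
    (ha : 0 ≤ a) (hb : 0 ≤ b) (ht : |t - t'| ≤ δ) (hδ : δ ≤ s) :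
    (exp (-α * t) * cutoff R t - exp (-α * t') * cutoff R t') * (b - a)
      ≤ (α + 1 / R) * exp (s * α) * (a * exp (-α * t) * δ)
        + (α + 1 / R) * exp (s * α) * (b * exp (-α * t') * δ) := by
  have hA := abs_exp_mul_cutoff_sub_le hα hR (ht.trans hδ)
  have hB := abs_exp_mul_cutoff_sub_le hα hR ((abs_sub_comm t' t).trans_le (ht.trans hδ))
  rw [abs_sub_comm (exp (-α * t') * cutoff R t'), abs_sub_comm t'] at hB
  have hA' : |exp (-α * t) * cutoff R t - exp (-α * t') * cutoff R t'|
      ≤ (α + 1 / R) * exp (s * α) * exp (-α * t) * δ := hA.trans (by gcongr)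
  have hB' : |exp (-α * t) * cutoff R t - exp (-α * t') * cutoff R t'|
      ≤ (α + 1 / R) * exp (s * α) * exp (-α * t') * δ := hB.trans (by gcongr)
  convert sub_mul_sub_le_mul_add_mul ha hb hA' hB' using 1
  ring

section Graph

variable {G : Type*}

lemma summable_mul_of_finite_support_right {w : G → ℝ} (hw : (support w).Finite) (f : G → ℝ) :
    Summable fun y => f y * w y :=
  summable_of_hasFiniteSupport (hw.subset (support_mul_subset_right _ _))

lemma summable_mul_of_finite_support_left {w : G → ℝ} (hw : (support w).Finite) (f : G → ℝ) :
    Summable fun y => w y * f y :=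
  summable_of_hasFiniteSupport (hw.subset (support_mul_subset_left _ _))

lemma finite_support_of_jump {ω d : G → G → ℝ} {s : ℝ} (hω : ∀ x y, 0 ≤ ω x y)
    (hd_symm : ∀ x y, d x y = d y x) (hjump : ∀ x y, 0 < ω x y → d x y ≤ s)
    (hballs : ∀ (x : G) (r : ℝ), {y | d y x < r}.Finite) (x : G) : (support (ω x)).Finite :=
  (hballs x (s + 1)).subset fun y hy => by
    have := hjump x y ((hω x y).lt_of_ne' hy)
    simp only [Set.mem_ofPred_eq, hd_symm y x]
    linarith

lemma nonneg_of_triangle {d : G → G → ℝ} (hd_self : ∀ x, d x x = 0)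
    (hd_symm : ∀ x y, d x y = d y x) (hd_tri : ∀ x y z, d x y ≤ d x z + d z y) (x y : G) :
    0 ≤ d x y := by
  linarith [hd_tri x x y, hd_self x, hd_symm x y]

lemma abs_sub_le_of_triangle {d : G → G → ℝ} (hd_symm : ∀ x y, d x y = d y x)
    (hd_tri : ∀ x y z, d x y ≤ d x z + d z y) (x y z : G) : |d x z - d y z| ≤ d x y :=
  abs_sub_le_iff.2 ⟨by linarith [hd_tri x z y], by linarith [hd_tri y z x, hd_symm x y]⟩

lemma abs_rpow_subsolution {ω : G → G → ℝ} {μ V u : G → ℝ} {c₀ p : ℝ} {x : G}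
    (hω : ∀ y, 0 ≤ ω x y) (hfin : (support (ω x)).Finite) (hp : 1 ≤ p) (hV : c₀ ≤ V x)
    (hμ : 0 < μ x) (hu : (μ x)⁻¹ * (∑' y, (u y - u x) * ω x y) - V x * u x = 0) :
    c₀ * p * (|u x| ^ p * μ x) ≤ ∑' y, (|u y| ^ p - |u x| ^ p) * ω x y := by
  have hlap : ∑' y, (u y - u x) * ω x y = μ x * (V x * u x) := by
    rwa [sub_eq_zero, inv_mul_eq_iff_eq_mul₀ hμ.ne'] at hu
  set K := p * |u x| ^ (p - 1) * SignType.sign (u x)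
  calc c₀ * p * (|u x| ^ p * μ x) ≤ V x * p * (|u x| ^ p * μ x) := by gcongr
    _ = K * ∑' y, (u y - u x) * ω x y := by
        rw [hlap, ← abs_rpow_sub_one_mul_sign_mul_self (by positivity) (u x)]; ring
    _ = ∑' y, K * ((u y - u x) * ω x y) := tsum_mul_left.symm
    _ ≤ ∑' y, (|u y| ^ p - |u x| ^ p) * ω x y := by
        refine Summable.tsum_le_tsum (fun y => ?_)
          ((summable_mul_of_finite_support_right hfin _).mul_left K)
          (summable_mul_of_finite_support_right hfin _)
        rw [← mul_assoc]
        exact mul_le_mul_of_nonneg_right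
          (mul_abs_rpow_sub_one_mul_sign_mul_sub_le hp (u x) (u y)) (hω y)

lemma finite_setOf_ne_zero_and_ne_zero {φ : G → ℝ} {ω : G → G → ℝ} (hφ : (support φ).Finite)
    (hω : ∀ x, (support (ω x)).Finite) :
    {z : G × G | φ z.1 ≠ 0 ∧ ω z.1 z.2 ≠ 0}.Finite :=
  (hφ.prod (hφ.biUnion fun x _ => hω x)).subset fun _ hz => ⟨hz.1, Set.mem_biUnion hz.1 hz.2⟩

lemma hasSum_sub_mul_sub_mul_of_symm {φ W : G → ℝ} {ω : G → G → ℝ} (hω_symm : ∀ x y, ω x y = ω y x)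
    (hω : ∀ x, (support (ω x)).Finite) (hφ : (support φ).Finite) :
    HasSum (fun z : G × G => (φ z.1 - φ z.2) * (W z.2 - W z.1) * ω z.1 z.2)
      (2 * ∑' x, φ x * ∑' y, (W y - W x) * ω x y) := by
  set f : G × G → ℝ := fun z => φ z.1 * ((W z.2 - W z.1) * ω z.1 z.2)
  have hf : Summable f := summable_of_hasFiniteSupport <|
    (finite_setOf_ne_zero_and_ne_zero hφ hω).subset fun z hz => by
      simp only [mem_support, f, mul_ne_zero_iff] at hz
      exact ⟨hz.1, hz.2.2⟩
  have hsum : ∑' x, φ x * ∑' y, (W y - W x) * ω x y = ∑' z, f z := by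
    rw [hf.tsum_prod' fun x => (summable_mul_of_finite_support_right (hω x) _).mul_left (φ x)]
    simp_rw [f, tsum_mul_left]
  have hswap : ∑' z : G × G, f z.swap = ∑' z, f z := (Equiv.prodComm G G).tsum_eq f
  convert (hf.add hf.prod_symm).hasSum using 1
  · ext z
    simp only [f, Prod.fst_swap, Prod.snd_swap, hω_symm z.2 z.1]
    ring
  · rw [hf.tsum_add hf.prod_symm, hswap, hsum]
    ring

lemma tsum_mul_le_mul_of_tsum_le {k : G → ℝ} {a b C : ℝ} (ha : 0 ≤ a)
    (hk : ∑' y, k y ≤ C * b) : ∑' y, a * k y ≤ C * (a * b) := by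
  rw [tsum_mul_left, mul_left_comm]
  exact mul_le_mul_of_nonneg_left hk ha

lemma summable_prod_mul_of_tsum_le {k : G → G → ℝ} {g μ : G → ℝ} {C : ℝ}
    (hk : ∀ x y, 0 ≤ k x y) (hks : ∀ x, Summable (k x)) (hkC : ∀ x, ∑' y, k x y ≤ C * μ x)
    (hg : ∀ x, 0 ≤ g x) (hgμ : Summable fun x => g x * μ x) :
    Summable fun z : G × G => g z.1 * k z.1 z.2 :=
  (summable_prod_of_nonneg fun z => mul_nonneg (hg z.1) (hk z.1 z.2)).2
    ⟨fun x => (hks x).mul_left (g x), (hgμ.mul_left C).of_nonneg_of_le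
      (fun x => tsum_nonneg fun y => mul_nonneg (hg x) (hk x y))
      fun x => tsum_mul_le_mul_of_tsum_le (hg x) (hkC x)⟩

lemma tsum_prod_mul_le_of_tsum_le {k : G → G → ℝ} {g μ : G → ℝ} {C : ℝ}
    (hk : ∀ x y, 0 ≤ k x y) (hks : ∀ x, Summable (k x)) (hkC : ∀ x, ∑' y, k x y ≤ C * μ x)
    (hg : ∀ x, 0 ≤ g x) (hgμ : Summable fun x => g x * μ x) :
    ∑' z : G × G, g z.1 * k z.1 z.2 ≤ C * ∑' x, g x * μ x := by
  have hsum := summable_prod_mul_of_tsum_le hk hks hkC hg hgμ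
  rw [hsum.tsum_prod' fun x => (hks x).mul_left (g x), ← tsum_mul_left]
  exact Summable.tsum_le_tsum (fun x => tsum_mul_le_mul_of_tsum_le (hg x) (hkC x)) hsum.prod
    (hgμ.mul_left C)

lemma summable_prod_snd_mul_of_symm {k : G → G → ℝ} {g : G → ℝ} (hk : ∀ x y, k x y = k y x)
    (hsum : Summable fun z : G × G => g z.1 * k z.1 z.2) :
    Summable fun z : G × G => g z.2 * k z.1 z.2 :=
  hsum.prod_symm.congr fun z => by rw [Prod.fst_swap, Prod.snd_swap, hk]

lemma tsum_prod_snd_mul_of_symm {k : G → G → ℝ} {g : G → ℝ} (hk : ∀ x y, k x y = k y x) :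
    ∑' z : G × G, g z.2 * k z.1 z.2 = ∑' z : G × G, g z.1 * k z.1 z.2 :=
  (tsum_congr fun z => by rw [hk]; rfl).trans
    ((Equiv.prodComm G G).tsum_eq fun z => g z.1 * k z.1 z.2)

lemma exp_mul_cutoff_sub_mul_sub_mul_le {ω d : G → G → ℝ} {W : G → ℝ} {x₀ : G} {s α R : ℝ}
    (hω_nonneg : ∀ x y, 0 ≤ ω x y) (hd_symm : ∀ x y, d x y = d y x)
    (hd_tri : ∀ x y z, d x y ≤ d x z + d z y) (hjump : ∀ x y, 0 < ω x y → d x y ≤ s)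
    (hW : ∀ x, 0 ≤ W x) (hα : 0 ≤ α) (hR : 0 < R) (x y : G) :
    (exp (-α * d x x₀) * cutoff R (d x x₀) - exp (-α * d y x₀) * cutoff R (d y x₀))
        * (W y - W x) * ω x y
      ≤ (α + 1 / R) * exp (s * α) * (W x * exp (-α * d x x₀) * (ω x y * d x y))
        + (α + 1 / R) * exp (s * α) * (W y * exp (-α * d y x₀) * (ω x y * d x y)) := by
  rcases (hω_nonneg x y).eq_or_lt with hω | hω
  · simp [← hω]
  · have := mul_le_mul_of_nonneg_right (exp_mul_cutoff_sub_mul_sub_le hα hR (hW x) (hW y)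
      (abs_sub_le_of_triangle hd_symm hd_tri x y x₀) (hjump x y hω)) hω.le
    exact le_of_eq_of_le (by ring) (this.trans_eq (by ring))

theorem mul_tsum_cutoff_le_of_subsolution {ω d : G → G → ℝ} {μ W : G → ℝ} {x₀ : G}
    {κ s C₀ α R : ℝ} (hω_nonneg : ∀ x y, 0 ≤ ω x y) (hω_symm : ∀ x y, ω x y = ω y x)
    (hnbr : ∀ x, (support (ω x)).Finite) (hd_nonneg : ∀ x y, 0 ≤ d x y)
    (hd_symm : ∀ x y, d x y = d y x) (hd_tri : ∀ x y z, d x y ≤ d x z + d z y)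
    (hjump : ∀ x y, 0 < ω x y → d x y ≤ s) (hballs : ∀ (x : G) (r : ℝ), {y | d y x < r}.Finite)
    (hintr1 : ∀ x, ∑' y, ω x y * d x y ≤ C₀ * μ x) (hW : ∀ x, 0 ≤ W x)
    (hsub : ∀ x, κ * (W x * μ x) ≤ ∑' y, (W y - W x) * ω x y)
    (hWsum : Summable fun x => W x * exp (-α * d x x₀) * μ x) (hα : 0 ≤ α) (hR : 0 < R) :
    κ * ∑' x, cutoff R (d x x₀) * (W x * exp (-α * d x x₀) * μ x)
      ≤ (α + 1 / R) * (exp (s * α) * C₀ * ∑' x, W x * exp (-α * d x x₀) * μ x) := by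
  set φ : G → ℝ := fun x => exp (-α * d x x₀) * cutoff R (d x x₀)
  set g : G → ℝ := fun x => W x * exp (-α * d x x₀)
  set k : G → G → ℝ := fun x y => ω x y * d x y
  set c := (α + 1 / R) * exp (s * α)
  have hφ_fin : (support φ).Finite := (hballs x₀ (2 * R)).subset fun x hx => by
    by_contra h
    exact hx (by simp only [φ, cutoff_eq_zero_of_le hR (not_lt.1 h), mul_zero])
  have hk_nonneg : ∀ x y, 0 ≤ k x y := fun x y => mul_nonneg (hω_nonneg x y) (hd_nonneg x y)
  have hk_sum : ∀ x, Summable (k x) := fun x => summable_mul_of_finite_support_left (hnbr x) _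
  have hg_nonneg : ∀ x, 0 ≤ g x := fun x => mul_nonneg (hW x) (exp_pos _).le
  have hk_symm : ∀ x y, k x y = k y x := fun x y => by simp only [k, hω_symm x, hd_symm x]
  have hB := summable_prod_mul_of_tsum_le hk_nonneg hk_sum hintr1 hg_nonneg hWsum
  have hB' := summable_prod_snd_mul_of_symm hk_symm hB
  have hpair : ∀ z : G × G, (φ z.1 - φ z.2) * (W z.2 - W z.1) * ω z.1 z.2
      ≤ c * (g z.1 * k z.1 z.2) + c * (g z.2 * k z.1 z.2) := fun z =>
    exp_mul_cutoff_sub_mul_sub_mul_le hω_nonneg hd_symm hd_tri hjump hW hα hR z.1 z.2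
  calc κ * ∑' x, cutoff R (d x x₀) * (W x * exp (-α * d x x₀) * μ x)
      = ∑' x, φ x * (κ * (W x * μ x)) := by
        rw [← tsum_mul_left]; exact tsum_congr fun x => by ring
    _ ≤ ∑' x, φ x * ∑' y, (W y - W x) * ω x y :=
        Summable.tsum_le_tsum
          (fun x => mul_le_mul_of_nonneg_left (hsub x)
            (mul_nonneg (exp_pos _).le (cutoff_nonneg _ _)))
          (summable_mul_of_finite_support_left hφ_fin _)
          (summable_mul_of_finite_support_left hφ_fin _)
    _ = (∑' z : G × G, (φ z.1 - φ z.2) * (W z.2 - W z.1) * ω z.1 z.2) / 2 := by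
        rw [(hasSum_sub_mul_sub_mul_of_symm hω_symm hnbr hφ_fin).tsum_eq]; ring
    _ ≤ (∑' z : G × G, (c * (g z.1 * k z.1 z.2) + c * (g z.2 * k z.1 z.2))) / 2 := by
        refine div_le_div_of_nonneg_right (Summable.tsum_le_tsum hpair
          (hasSum_sub_mul_sub_mul_of_symm hω_symm hnbr hφ_fin).summable
          ((hB.mul_left c).add (hB'.mul_left c))) zero_le_two
    _ = c * ∑' z : G × G, g z.1 * k z.1 z.2 := by
        rw [(hB.mul_left c).tsum_add (hB'.mul_left c), tsum_mul_left, tsum_mul_left,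
          tsum_prod_snd_mul_of_symm hk_symm]
        ring
    _ ≤ c * (C₀ * ∑' x, g x * μ x) := by
        gcongr
        exact tsum_prod_mul_le_of_tsum_le hk_nonneg hk_sum hintr1 hg_nonneg hWsum
    _ = (α + 1 / R) * (exp (s * α) * C₀ * ∑' x, W x * exp (-α * d x x₀) * μ x) := by ring

lemma mul_tsum_le_of_forall_mul_tsum_cutoff_le {T r : G → ℝ} {κ α K : ℝ} (hT : ∀ x, 0 ≤ T x)
    (hT_sum : Summable T) (h : ∀ n : ℕ, 0 < n → κ * ∑' x, cutoff n (r x) * T x ≤ (α + 1 / n) * K) :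
    κ * ∑' x, T x ≤ α * K := by
  have hcutoff : ∀ x, ∀ᶠ n : ℕ in atTop, cutoff n (r x) * T x = T x := fun x => by
    filter_upwards [eventually_gt_atTop 0, tendsto_natCast_atTop_atTop.eventually_ge_atTop (r x)]
      with n hn hrn
    rw [cutoff_eq_one_of_le (Nat.cast_pos.2 hn) hrn, one_mul]
  have hlhs : Tendsto (fun n : ℕ => ∑' x, cutoff n (r x) * T x) atTop (𝓝 (∑' x, T x)) :=
    tendsto_tsum_of_dominated_convergence hT_sum
      (fun x => tendsto_nhds_of_eventually_eq (hcutoff x))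
      (Eventually.of_forall fun n x => by
        rw [Real.norm_eq_abs, abs_of_nonneg (mul_nonneg (cutoff_nonneg _ _) (hT x))]
        exact mul_le_of_le_one_left (hT x) (cutoff_le_one _ _))
  have hrhs : Tendsto (fun n : ℕ => (α + 1 / n) * K) atTop (𝓝 (α * K)) := by
    simpa using (tendsto_const_nhds.add tendsto_one_div_atTop_nhds_zero_nat).mul_const K
  exact le_of_tendsto_of_tendsto (hlhs.const_mul κ) hrhs
    ((eventually_gt_atTop 0).mono fun n hn => h n hn)

end Graph

theorem stmt17_general {G : Type*}
    (ω : G → G → ℝ) (μ : G → ℝ) (d : G → G → ℝ)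
    (hω_nonneg : ∀ x y, 0 ≤ ω x y)
    (hω_symm : ∀ x y, ω x y = ω y x)
    (hμ : ∀ x, 0 < μ x)
    (hd_self : ∀ x, d x x = 0)
    (hd_symm : ∀ x y, d x y = d y x)
    (hd_tri : ∀ x y z, d x y ≤ d x z + d z y)
    (s : ℝ) (hjump : ∀ x y, 0 < ω x y → d x y ≤ s)
    (hballs : ∀ (x : G) (r : ℝ), {y | d y x < r}.Finite)
    (C₀ : ℝ)
    (hintr1 : ∀ x, ∑' y, ω x y * d x y ≤ C₀ * μ x)
    (V : G → ℝ) (c₀ : ℝ) (hV : ∀ x, c₀ ≤ V x)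
    (p α : ℝ) (hp : 1 ≤ p) (hα : 0 < α)
    (hαcond : C₀ * α * Real.exp (s * α) < c₀ * p)
    (u : G → ℝ)
    (hu : ∀ x, (μ x)⁻¹ * (∑' y, (u y - u x) * ω x y) - V x * u x = 0)
    (x₀ : G)
    (hℓp : Summable fun x => |u x| ^ p * Real.exp (-α * d x x₀) * μ x) :
    ∀ x, u x = 0 := by
  have hnbr := finite_support_of_jump hω_nonneg hd_symm hjump hballs
  have hterm_nonneg : ∀ x, 0 ≤ |u x| ^ p * exp (-α * d x x₀) * μ x := fun x => by
    have := hμ x; positivity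
  set S := ∑' x, |u x| ^ p * exp (-α * d x x₀) * μ x with hS_def
  have hS : c₀ * p * S ≤ α * (exp (s * α) * C₀ * S) :=
    mul_tsum_le_of_forall_mul_tsum_cutoff_le hterm_nonneg hℓp fun n hn =>
      mul_tsum_cutoff_le_of_subsolution hω_nonneg hω_symm hnbr
        (nonneg_of_triangle hd_self hd_symm hd_tri) hd_symm hd_tri hjump hballs hintr1
        (fun x => rpow_nonneg (abs_nonneg (u x)) p)
        (fun x => abs_rpow_subsolution (hω_nonneg x) (hnbr x) hp (hV x) (hμ x) (hu x))
        hℓp hα.le (Nat.cast_pos.2 hn)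
  have hS0 : S = 0 := by nlinarith [(tsum_nonneg hterm_nonneg : 0 ≤ S)]
  have hsum0 := hℓp.hasSum
  rw [← hS_def, hS0, hasSum_zero_iff_of_nonneg hterm_nonneg] at hsum0
  intro x
  have hterm : |u x| ^ p * exp (-α * d x x₀) * μ x = 0 := congr_fun hsum0 x
  simpa [(hμ x).ne', (exp_pos _).ne', rpow_eq_zero (abs_nonneg (u x)) (by linarith : p ≠ 0)]
    using hterm

/-- Theorem 3.3: uniqueness in weighted ℓ^p, p ≥ 1, under the extra
1-intrinsic assumption. -/
theorem stmt17 {G : Type*} [Countable G] [Infinite G]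
    (ω : G → G → ℝ) (μ : G → ℝ) (d : G → G → ℝ)
    (hω_nonneg : ∀ x y, 0 ≤ ω x y)
    (hω_symm : ∀ x y, ω x y = ω y x)
    (hω_diag : ∀ x, ω x x = 0)
    (hω_sum : ∀ x, Summable fun y => ω x y)
    (hconn : ∀ x y : G, Relation.ReflTransGen (fun a b => 0 < ω a b) x y)
    (hμ : ∀ x, 0 < μ x)
    (hd_self : ∀ x, d x x = 0)
    (hd_symm : ∀ x y, d x y = d y x)
    (hd_tri : ∀ x y z, d x y ≤ d x z + d z y)
    (s : ℝ) (hs : 0 ≤ s) (hjump : ∀ x y, 0 < ω x y → d x y ≤ s)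
    (hballs : ∀ (x : G) (r : ℝ), {y | d y x < r}.Finite)
    (hwsum : ∀ x, Summable fun y => ω x y * (d x y)^2)
    (hintr : ∀ x, ∑' y, ω x y * (d x y)^2 ≤ μ x)
    (C₀ : ℝ)
    (hdsum : ∀ x, Summable fun y => ω x y * d x y)
    (hintr1 : ∀ x, ∑' y, ω x y * d x y ≤ C₀ * μ x)
    (V : G → ℝ) (c₀ : ℝ) (hc₀ : 0 < c₀) (hV : ∀ x, c₀ ≤ V x)
    (p α : ℝ) (hp : 1 ≤ p) (hα : 0 < α)
    (hαcond : C₀ * α * Real.exp (s * α) < c₀ * p)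
    (u : G → ℝ)
    (hu_sum : ∀ x, Summable fun y => (u y - u x) * ω x y)
    (hu : ∀ x, (μ x)⁻¹ * (∑' y, (u y - u x) * ω x y) - V x * u x = 0)
    (x₀ : G)
    (hℓp : Summable fun x => |u x| ^ p * Real.exp (-α * d x x₀) * μ x) :
    ∀ x, u x = 0 :=
  stmt17_general ω μ d hω_nonneg hω_symm hμ hd_self hd_symm hd_tri s hjump hballs C₀ hintr1 V c₀ hV
    p α hp hα hαcond u hu x₀ hℓp
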